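/- arXiv:0811.0601 — 2 statements merged into one kernel-verified Lean document; each statement's English description precedes it below -/
import Mathlib

section
/- Let ξ₁, …, ξ_N be distinct positive real numbers and let k₁ < k₂ < … < k_N be distinct natural numbers. Then the generalized Vandermonde matrix V with entries V_{ij} = ξ_i^{k_j} is invertible (its columns are linearly independent). -/
/-!
A nonzero vector `v` in the kernel of `(ξᵢ ^ kⱼ)` gives the polynomial `∑ⱼ vⱼ X ^ kⱼ`, which has at
most `N` nonzero coefficients but vanishes at the `N` distinct positive points `ξᵢ`. By Descartes'
rule of signs its number of positive roots is bounded by its number of sign changes, which is less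
than its number of nonzero coefficients.
-/

open Finset Polynomial

namespace Polynomial

theorem signVariations_lt_card_support {R : Type*} [Semiring R] [LinearOrder R] {P : R[X]}
    (hP : P ≠ 0) : signVariations P < #P.support := by
  induction h : #P.support generalizing P with
  | zero => exact absurd (card_support_eq_zero.mp h) hP
  | succ n ih =>
    by_cases hlead : P.eraseLead = 0
    · rw [← eraseLead_add_monomial_natDegree_leadingCoeff P, hlead, zero_add,
        signVariations_monomial]
      exact n.succ_pos
    · calc signVariations P ≤ signVariations P.eraseLead + 1 := signVariations_le_eraseLead_succ P
        _ < n + 1 := Nat.succ_lt_succ (ih hlead (card_support_eraseLead' h))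

theorem card_lt_card_support_of_forall_pos_isRoot {R : Type*} [CommRing R] [LinearOrder R]
    [IsStrictOrderedRing R] {P : R[X]} (hP : P ≠ 0) {S : Finset R}
    (hS : ∀ x ∈ S, 0 < x ∧ P.IsRoot x) : #S < #P.support := by
  have hS_le : S.val ≤ P.roots.filter (0 < ·) :=
    (Multiset.le_iff_subset S.nodup).mpr fun x hx =>
      Multiset.mem_filter.mpr ⟨(mem_roots hP).mpr (hS x hx).2, (hS x hx).1⟩
  calc #S ≤ P.roots.countP (0 < ·) := by
        rw [Multiset.countP_eq_card_filter]
        exact Multiset.card_le_card hS_le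
    _ ≤ signVariations P := roots_countP_pos_le_signVariations P
    _ < #P.support := signVariations_lt_card_support hP

section SumMonomial

variable {R ι : Type*} [Semiring R] [Fintype ι]

theorem card_support_sum_monomial_le (k : ι → ℕ) (c : ι → R) :
    #(∑ j, monomial (k j) (c j)).support ≤ Fintype.card ι := by
  classical
  have hsupp : (∑ j, monomial (k j) (c j)).support ⊆ univ.image k := by
    intro n hn
    rw [mem_support_iff, finsetSum_coeff] at hn
    obtain ⟨j, -, hj⟩ := exists_ne_zero_of_sum_ne_zero hn
    rw [coeff_monomial] at hj
    exact mem_image.mpr ⟨j, mem_univ j, (ite_ne_right_iff.mp hj).1⟩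
  exact (card_le_card hsupp).trans card_image_le

theorem coeff_sum_monomial_of_injective {k : ι → ℕ} (hk : k.Injective) (c : ι → R) (i : ι) :
    (∑ j, monomial (k j) (c j)).coeff (k i) = c i := by
  rw [finsetSum_coeff, sum_eq_single i]
  · exact coeff_monomial_same (k i) (c i)
  · exact fun j _ hji => coeff_monomial_of_ne _ (hk.ne hji.symm)
  · exact fun hi => absurd (mem_univ i) hi

theorem sum_monomial_ne_zero {k : ι → ℕ} (hk : k.Injective) {c : ι → R} (hc : c ≠ 0) :
    ∑ j, monomial (k j) (c j) ≠ 0 := by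
  obtain ⟨i, hi⟩ := Function.ne_iff.mp hc
  intro hzero
  rw [← coeff_sum_monomial_of_injective hk c i, hzero, coeff_zero] at hi
  exact hi rfl

end SumMonomial

end Polynomial

/-- Generalized Vandermonde: for distinct positive reals ξᵢ and strictly
increasing natural exponents kⱼ, the matrix (ξᵢ ^ kⱼ) is invertible. -/
theorem generalized_vandermonde_invertible (N : ℕ) (ξ : Fin N → ℝ) (k : Fin N → ℕ)
    (hpos : ∀ i, 0 < ξ i) (hdist : Function.Injective ξ) (hk : StrictMono k) :
    IsUnit (Matrix.of fun i j : Fin N => ξ i ^ k j) := by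
  rw [Matrix.isUnit_iff_isUnit_det, isUnit_iff_ne_zero]
  intro hdet
  obtain ⟨v, hv, hkernel⟩ := Matrix.exists_mulVec_eq_zero_iff.mpr hdet
  set p : ℝ[X] := ∑ j, monomial (k j) (v j)
  have hroots : ∀ x ∈ univ.image ξ, 0 < x ∧ p.IsRoot x := by
    simp only [mem_image, mem_univ, true_and, forall_exists_index, forall_apply_eq_imp_iff]
    intro i
    refine ⟨hpos i, ?_⟩
    simpa [p, IsRoot, eval_finsetSum, Matrix.mulVec, dotProduct, mul_comm] using
      congrFun hkernel i
  have hcard := (card_lt_card_support_of_forall_pos_isRoot (sum_monomial_ne_zero hk.injective hv)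
    hroots).trans_le (card_support_sum_monomial_le k v)
  simp [card_image_of_injective _ hdist] at hcard
end

section
/- Let μ^(i) = a ξ_i + (1−a) ξ̄ where ξ̄ = Σ_j p_j ξ_j, and draw a new value with mean μ^(i) (with index i sampled according to p) and variance h²V where V = Σ_j p_j (ξ_j − ξ̄)² and h² = 1 − a². Then the resulting mixture distribution has mean ξ̄ and variance equal to V, i.e., the Liu–West kernel with h² = 1 − a² preserves the first two moments. -/
/-- The Liu–West kernel with shrinkage μᵢ = aξᵢ + (1-a)ξ̄ and h² = 1 - a²
preserves the mean and variance of the particle distribution: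
Σᵢ pᵢ μᵢ = ξ̄ and Σᵢ pᵢ (h²V + (μᵢ - ξ̄)²) = V. -/
theorem liu_west_kernel_preserves_moments (N : ℕ) (p ξ : Fin N → ℝ)
    (hp : ∀ i, 0 ≤ p i) (hps : ∑ i, p i = 1)
    (a : ℝ) (ha : a ∈ Set.Icc (0 : ℝ) 1) :
    (∑ i, p i * (a * ξ i + (1 - a) * (∑ j, p j * ξ j)) = ∑ j, p j * ξ j) ∧
    (∑ i, p i * ((1 - a ^ 2) * (∑ j, p j * (ξ j - ∑ k, p k * ξ k) ^ 2) +
        ((a * ξ i + (1 - a) * (∑ j, p j * ξ j)) - ∑ j, p j * ξ j) ^ 2) =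
      ∑ j, p j * (ξ j - ∑ k, p k * ξ k) ^ 2) := by
  set m := ∑ j, p j * ξ j with hm
  set V := ∑ j, p j * (ξ j - m) ^ 2 with hV
  constructor
  · have h1 : ∑ i, p i * (a * ξ i + (1 - a) * m)
        = ∑ i, (a * (p i * ξ i) + (1 - a) * m * p i) :=
      Finset.sum_congr rfl fun i _ => by ring
    rw [h1, Finset.sum_add_distrib, ← Finset.mul_sum, ← Finset.mul_sum, hps, ← hm]; ring
  · have h2 : ∑ i, p i * ((1 - a ^ 2) * V + (a * ξ i + (1 - a) * m - m) ^ 2)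
        = ∑ i, ((1 - a ^ 2) * V * p i + a ^ 2 * (p i * (ξ i - m) ^ 2)) :=
      Finset.sum_congr rfl fun i _ => by ring
    rw [h2, Finset.sum_add_distrib, ← Finset.mul_sum, ← Finset.mul_sum, hps, ← hV]; ring
end
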